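/- arXiv:1604.07597 — 5 statements merged into one kernel-verified Lean document; each statement's English description precedes it below -/
import Mathlib

section
/- Let p > 1 be a real number, n ≥ 1, α = (α_1,...,α_n) a multi-index of non-negative integers, and z = x + iy ∈ ℂⁿ with y_j > 0 for every j. Then ∫_{ℝⁿ} ∏_{j=1}^n |ξ_j − conj(z_j)|^{−p(α_j+1)} dξ = π^{n/2} ∏_{j=1}^n [Γ(−1/2 + p(α_j+1)/2) / Γ(p(α_j+1)/2)] · (1/y_j)^{p(α_j+1)−1}. -/
/-!
Both sides factor over the coordinates (Fubini), so everything reduces to the one-variable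
integral `∫ ((ξ - x)² + y²)^(-q/2) dξ`. Translating by `x` and scaling by `y` reduces it to
`∫ (1 + s²)^(-a) ds` with `a = q/2`. Writing
`Γ(a) (1 + s²)^(-a) = ∫₀^∞ t^(a-1) e^(-t) e^(-t s²) dt`, exchanging the integrals and
evaluating the Gaussian integral `∫ e^(-t s²) ds = √(π/t)` leaves
`√π ∫₀^∞ t^(a-3/2) e^(-t) dt = √π Γ(a - 1/2)`.
-/

open MeasureTheory Real Set

theorem lintegral_Ioi_rpow_mul_exp_neg_mul {a r : ℝ} (ha : 0 < a) (hr : 0 < r) :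
    ∫⁻ t in Ioi 0, ENNReal.ofReal (t ^ (a - 1) * exp (-(r * t))) =
      ENNReal.ofReal ((1 / r) ^ a * Gamma a) := by
  rw [← integral_rpow_mul_exp_neg_mul_Ioi ha hr]
  refine (ofReal_integral_eq_lintegral_ofReal ?_ ?_).symm
  · have h := integrableOn_rpow_mul_exp_neg_mul_rpow (p := 1) (s := a - 1) (by linarith) one_pos hr
    simp only [rpow_one, neg_mul] at h
    exact h
  · filter_upwards [ae_restrict_mem measurableSet_Ioi] with t (ht : 0 < t)
    positivity

theorem lintegral_exp_neg_mul_sq {b : ℝ} (hb : 0 < b) :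
    ∫⁻ s : ℝ, ENNReal.ofReal (exp (-(b * s ^ 2))) = ENNReal.ofReal √(π / b) := by
  rw [← ofReal_integral_eq_lintegral_ofReal, ← integral_gaussian b]
  · simp only [neg_mul]
  · simpa only [neg_mul] using integrable_exp_neg_mul_sq hb
  · exact .of_forall fun s => by positivity

theorem Gamma_mul_lintegral_one_add_sq_rpow_neg {a : ℝ} (ha : 1 / 2 < a) :
    ENNReal.ofReal (Gamma a) * ∫⁻ s : ℝ, ENNReal.ofReal ((1 + s ^ 2) ^ (-a)) =
      ENNReal.ofReal (√π * Gamma (a - 1 / 2)) := by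
  have ha₀ : 0 < a := by linarith
  calc ENNReal.ofReal (Gamma a) * ∫⁻ s : ℝ, ENNReal.ofReal ((1 + s ^ 2) ^ (-a))
      = ∫⁻ s : ℝ, ∫⁻ t in Ioi 0,
          ENNReal.ofReal (t ^ (a - 1) * exp (-t)) * ENNReal.ofReal (exp (-(t * s ^ 2))) := by
        rw [← lintegral_const_mul' _ _ ENNReal.ofReal_ne_top]
        refine lintegral_congr fun s => ?_
        have hs : 0 < 1 + s ^ 2 := by positivity
        rw [← ENNReal.ofReal_mul (Gamma_pos_of_pos ha₀).le, mul_comm,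
          rpow_neg hs.le, ← inv_rpow hs.le, ← one_div,
          ← lintegral_Ioi_rpow_mul_exp_neg_mul ha₀ hs]
        refine setLIntegral_congr_fun measurableSet_Ioi fun t (ht : 0 < t) => ?_
        rw [← ENNReal.ofReal_mul (by positivity), mul_assoc, ← exp_add]
        ring_nf
    _ = ∫⁻ t in Ioi 0, ∫⁻ s : ℝ,
          ENNReal.ofReal (t ^ (a - 1) * exp (-t)) * ENNReal.ofReal (exp (-(t * s ^ 2))) :=
        lintegral_lintegral_swap (by fun_prop)
    _ = ∫⁻ t in Ioi 0,
          ENNReal.ofReal √π * ENNReal.ofReal (t ^ (a - 1 / 2 - 1) * exp (-(1 * t))) := by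
        refine setLIntegral_congr_fun measurableSet_Ioi fun t (ht : 0 < t) => ?_
        rw [lintegral_const_mul' _ _ ENNReal.ofReal_ne_top, lintegral_exp_neg_mul_sq ht,
          ← ENNReal.ofReal_mul (by positivity), ← ENNReal.ofReal_mul (by positivity),
          sqrt_div' _ ht.le, sqrt_eq_rpow t, one_mul]
        congr 1
        have : t ^ (a - 1 / 2 - 1) = t ^ (a - 1) / t ^ (1 / 2 : ℝ) := by
          rw [← rpow_sub ht]; ring_nf
        rw [this]
        ring
    _ = ENNReal.ofReal (√π * Gamma (a - 1 / 2)) := by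
        rw [lintegral_const_mul' _ _ ENNReal.ofReal_ne_top,
          lintegral_Ioi_rpow_mul_exp_neg_mul (by linarith) one_pos,
          ← ENNReal.ofReal_mul (sqrt_nonneg π)]
        simp

theorem integral_one_add_sq_rpow_neg {a : ℝ} (ha : 1 / 2 < a) :
    ∫ s : ℝ, (1 + s ^ 2) ^ (-a) = √π * Gamma (a - 1 / 2) / Gamma a := by
  have hΓ : 0 < Gamma a := Gamma_pos_of_pos (by linarith)
  have hL := Gamma_mul_lintegral_one_add_sq_rpow_neg ha
  rw [← ENNReal.eq_div_iff (by simpa using hΓ) ENNReal.ofReal_ne_top] at hL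
  rw [integral_eq_lintegral_of_nonneg_ae (.of_forall fun s => by positivity)
      (by fun_prop : Measurable fun s : ℝ => (1 + s ^ 2) ^ (-a)).aestronglyMeasurable,
    hL, ENNReal.toReal_div, ENNReal.toReal_ofReal hΓ.le, ENNReal.toReal_ofReal
      (mul_nonneg (sqrt_nonneg _) (Gamma_pos_of_pos (by linarith)).le)]

theorem integral_sq_add_sq_rpow_neg {a c : ℝ} (ha : 1 / 2 < a) (hc : 0 < c) :
    ∫ s : ℝ, (s ^ 2 + c ^ 2) ^ (-a) = √π * Gamma (a - 1 / 2) / Gamma a * c ^ (1 - 2 * a) := by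
  have hscale : ∀ s : ℝ, ((c * s) ^ 2 + c ^ 2) ^ (-a) = c ^ (-2 * a) * (1 + s ^ 2) ^ (-a) := by
    intro s
    rw [show (c * s) ^ 2 + c ^ 2 = c ^ (2 : ℝ) * (1 + s ^ 2) by rw [rpow_two]; ring,
      mul_rpow (by positivity) (by positivity), ← rpow_mul hc.le]
    ring_nf
  have h := Measure.integral_comp_mul_left (fun s : ℝ => (s ^ 2 + c ^ 2) ^ (-a)) c
  simp only [hscale, integral_const_mul, integral_one_add_sq_rpow_neg ha, smul_eq_mul,
    abs_inv, abs_of_pos hc] at h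
  rw [eq_inv_mul_iff_mul_eq₀ hc.ne'] at h
  rw [← h, show 1 - 2 * a = 1 + -2 * a by ring, rpow_add hc, rpow_one]
  ring

theorem integral_norm_ofReal_sub_rpow_neg {q : ℝ} (hq : 1 < q) {z : ℂ} (hz : z.im ≠ 0) :
    ∫ ξ : ℝ, ‖(ξ : ℂ) - z‖ ^ (-q) =
      √π * Gamma ((q - 1) / 2) / Gamma (q / 2) * |z.im| ^ (1 - q) := by
  have hnorm : ∀ ξ : ℝ, ‖(ξ : ℂ) - z‖ ^ (-q) = ((ξ - z.re) ^ 2 + |z.im| ^ 2) ^ (-(q / 2)) := by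
    intro ξ
    rw [Complex.norm_def, sqrt_eq_rpow, ← rpow_mul (Complex.normSq_nonneg _),
      Complex.normSq_apply, sq_abs]
    simp only [Complex.sub_re, Complex.ofReal_re, Complex.sub_im, Complex.ofReal_im]
    ring_nf
  simp only [hnorm]
  rw [integral_sub_right_eq_self (fun t : ℝ => (t ^ 2 + |z.im| ^ 2) ^ (-(q / 2))) z.re,
    integral_sq_add_sq_rpow_neg (by linarith) (abs_pos.mpr hz)]
  ring_nf

theorem lp_norm_of_cauchy_szego_derivative_general
    (n : ℕ) (p : ℝ) (hp : 1 < p) (α : Fin n → ℕ)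
    (x y : Fin n → ℝ) (hy : ∀ j, 0 < y j) :
    (∫ ξ : Fin n → ℝ,
        ∏ j, ‖(ξ j : ℂ) - ((x j : ℂ) - (y j : ℂ) * Complex.I)‖ ^
          (-(p * ((α j : ℝ) + 1)))) =
      Real.pi ^ ((n : ℝ) / 2) *
        ∏ j, (Real.Gamma (-(1 / 2) + p * ((α j : ℝ) + 1) / 2) /
              Real.Gamma (p * ((α j : ℝ) + 1) / 2)) *
          (1 / y j) ^ (p * ((α j : ℝ) + 1) - 1) := by
  have hfactor : ∀ j, ∫ ξ : ℝ, ‖(ξ : ℂ) - ((x j : ℂ) - (y j : ℂ) * Complex.I)‖ ^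
      (-(p * ((α j : ℝ) + 1))) = √π * (Gamma (-(1 / 2) + p * ((α j : ℝ) + 1) / 2) /
        Gamma (p * ((α j : ℝ) + 1) / 2) * (1 / y j) ^ (p * ((α j : ℝ) + 1) - 1)) := by
    intro j
    have hq : 1 < p * ((α j : ℝ) + 1) := by
      nlinarith [(Nat.cast_nonneg (α j) : (0 : ℝ) ≤ α j)]
    have him : ((x j : ℂ) - (y j : ℂ) * Complex.I).im = -y j := by simp
    rw [integral_norm_ofReal_sub_rpow_neg hq (by simpa [him] using (hy j).ne'), him, abs_neg,
      abs_of_pos (hy j), one_div (y j), inv_rpow (hy j).le, ← rpow_neg (hy j).le]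
    ring_nf
  rw [integral_fintype_prod_volume_eq_prod
      (f := fun j (ξ : ℝ) => ‖(ξ : ℂ) - ((x j : ℂ) - (y j : ℂ) * Complex.I)‖ ^
        (-(p * ((α j : ℝ) + 1)))),
    Finset.prod_congr rfl fun j _ => hfactor j, Finset.prod_mul_distrib, Finset.prod_const,
    Finset.card_univ, Fintype.card_fin, sqrt_eq_rpow, ← rpow_natCast, ← rpow_mul pi_pos.le]
  ring_nf

/-- The `L^p` norm (to the `p`-th power) of the product
`ξ ↦ ∏ j (ξ_j - conj z_j)^{-(α_j+1)}`, where `z = x + iy` lies in the tube over the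
first octant. -/
theorem lp_norm_of_cauchy_szego_derivative
    (n : ℕ) (hn : 1 ≤ n) (p : ℝ) (hp : 1 < p) (α : Fin n → ℕ)
    (x y : Fin n → ℝ) (hy : ∀ j, 0 < y j) :
    (∫ ξ : Fin n → ℝ,
        ∏ j, ‖(ξ j : ℂ) - ((x j : ℂ) - (y j : ℂ) * Complex.I)‖ ^
          (-(p * ((α j : ℝ) + 1)))) =
      Real.pi ^ ((n : ℝ) / 2) *
        ∏ j, (Real.Gamma (-(1 / 2) + p * ((α j : ℝ) + 1) / 2) /
              Real.Gamma (p * ((α j : ℝ) + 1) / 2)) *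
          (1 / y j) ^ (p * ((α j : ℝ) + 1) - 1) :=
  lp_norm_of_cauchy_szego_derivative_general n p hp α x y hy
end

section
/- There exists a constant C > 0, independent of α, such that for every integer α ≥ 1 and all real numbers y > 0 and η > 0: (2y)^{α+1/2} · α! / ((y+η)^{α+1} · √((2α)!)) ≤ C · η^{−1/2} · α^{−1/4}. -/
lemma cb_sqrt_bound : ∀ n : ℕ, 1 ≤ n → (4:ℝ)^n ≤ 2 * Real.sqrt n * (Nat.centralBinom n : ℝ) := by
  intro n hn
  induction n with
  | zero => omega
  | succ m ih =>
    rcases Nat.eq_zero_or_pos m with hm | hm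
    · subst hm
      norm_num [Nat.centralBinom]
    · have ih' := ih hm
      have hrec : ((m:ℝ)+1) * (Nat.centralBinom (m+1) : ℝ)
          = 2*(2*(m:ℝ)+1) * (Nat.centralBinom m : ℝ) := by
        exact_mod_cast congrArg (Nat.cast : ℕ → ℝ) (Nat.succ_mul_centralBinom_succ m)
      push_cast
      set x := Real.sqrt m with hxdef
      set z := Real.sqrt ((m:ℝ)+1) with hzdef
      have hx0 : 0 ≤ x := Real.sqrt_nonneg _
      have hz0 : 0 ≤ z := Real.sqrt_nonneg _
      have hx2 : x^2 = m := Real.sq_sqrt (by positivity)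
      have hz2 : z^2 = (m:ℝ)+1 := Real.sq_sqrt (by positivity)
      have hz1 : 1 ≤ z := by nlinarith
      have hCB : (0:ℝ) < (Nat.centralBinom m : ℝ) := by
        exact_mod_cast Nat.centralBinom_pos m
      have hm1 : (1:ℝ) ≤ (m:ℝ) := by exact_mod_cast hm
      have hs : 0 < z*(2*(m:ℝ)+1) + 2*x*((m:ℝ)+1) := by nlinarith
      have hds : (z*(2*(m:ℝ)+1) - 2*x*((m:ℝ)+1)) * (z*(2*(m:ℝ)+1) + 2*x*((m:ℝ)+1))
          = (m:ℝ)+1 := by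
        linear_combination (2*(m:ℝ)+1)^2 * hz2 - 4*((m:ℝ)+1)^2 * hx2
      have hkey : 2*x*((m:ℝ)+1) ≤ z*(2*(m:ℝ)+1) := by nlinarith [hds, hs]
      have h1 : (4:ℝ)^(m+1) ≤ 4 * (2 * x * (Nat.centralBinom m : ℝ)) := by
        have : (4:ℝ)^(m+1) = 4 * 4^m := by ring
        rw [this]; nlinarith [ih']
      refine h1.trans ?_
      nlinarith [mul_le_mul_of_nonneg_right hkey hCB.le, hrec,
        mul_pos hCB (show (0:ℝ) < (m:ℝ)+1 by positivity)]

lemma fact_sqrt_bound (α : ℕ) (hα : 1 ≤ α) :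
    (Nat.factorial α : ℝ) ≤
      Real.sqrt 2 * (α:ℝ)^((1:ℝ)/4) * Real.sqrt (Nat.factorial (2*α)) / 2^α := by
  have hcb := cb_sqrt_bound α hα
  have ha0 : (0:ℝ) < (α:ℝ) := by exact_mod_cast hα
  have h0 : Nat.centralBinom α * (α.factorial * α.factorial) = (2*α).factorial := by
    have h := Nat.choose_mul_factorial_mul_factorial (show α ≤ 2*α by omega)
    rw [show 2*α - α = α from by omega] at h
    rw [Nat.centralBinom_eq_two_mul_choose, ← mul_assoc]
    exact h
  have hfacR : (Nat.centralBinom α : ℝ) * ((α.factorial:ℝ) * (α.factorial:ℝ))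
      = ((2*α).factorial : ℝ) := by exact_mod_cast congrArg (Nat.cast : ℕ → ℝ) h0
  have hfp : (0:ℝ) < (α.factorial : ℝ) := by exact_mod_cast α.factorial_pos
  have hA : ((α.factorial:ℝ))^2 * 4^α ≤ 2 * Real.sqrt α * ((2*α).factorial : ℝ) := by
    have h1 := mul_le_mul_of_nonneg_left hcb (sq_nonneg (α.factorial:ℝ))
    have e : ((α.factorial:ℝ))^2 * (2 * Real.sqrt α * (Nat.centralBinom α : ℝ))
        = 2 * Real.sqrt α * ((2*α).factorial : ℝ) := by rw [← hfacR]; ring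
    linarith [h1, e.le, e.ge]
  set b : ℝ := Real.sqrt 2 * (α:ℝ)^((1:ℝ)/4) * Real.sqrt (Nat.factorial (2*α)) / 2^α with hb
  have hbnn : 0 ≤ b := by positivity
  have hbsq : b^2 = 2 * Real.sqrt α * ((2*α).factorial : ℝ) / 4^α := by
    rw [hb]
    rw [div_pow, mul_pow, mul_pow, Real.sq_sqrt (by norm_num : (0:ℝ) ≤ 2),
      Real.sq_sqrt (by positivity : (0:ℝ) ≤ ((2*α).factorial : ℝ))]
    have e1 : ((α:ℝ)^((1:ℝ)/4))^2 = Real.sqrt α := by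
      rw [← Real.rpow_natCast ((α:ℝ)^((1:ℝ)/4)) 2, ← Real.rpow_mul ha0.le,
        Real.sqrt_eq_rpow]
      norm_num
    have e2 : ((2:ℝ)^α)^2 = 4^α := by
      rw [← pow_mul, show (4:ℝ) = 2^2 by norm_num, ← pow_mul, mul_comm]
    rw [e1, e2]
  calc (α.factorial : ℝ) = Real.sqrt (((α.factorial:ℝ))^2) := (Real.sqrt_sq hfp.le).symm
    _ ≤ Real.sqrt (b^2) := by
        apply Real.sqrt_le_sqrt
        rw [hbsq, le_div_iff₀ (by positivity : (0:ℝ) < 4^α)]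
        exact hA
    _ = b := Real.sqrt_sq hbnn

set_option maxHeartbeats 1000000 in
/-- The one-dimensional Stirling-type estimate: there is a constant `C > 0`, independent of
`α`, such that `(2y)^{α+1/2} α! / ((y+η)^{α+1} √((2α)!)) ≤ C η^{-1/2} α^{-1/4}` for all
integers `α ≥ 1` and reals `y, η > 0`. -/
theorem stirling_kernel_estimate :
    ∃ C : ℝ, 0 < C ∧ ∀ α : ℕ, 1 ≤ α → ∀ y η : ℝ, 0 < y → 0 < η →
      (2 * y) ^ ((α : ℝ) + 1 / 2) * (Nat.factorial α : ℝ) /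
          ((y + η) ^ (α + 1) * Real.sqrt (Nat.factorial (2 * α))) ≤
        C * η ^ (-(1 / 2) : ℝ) * (α : ℝ) ^ (-(1 / 4) : ℝ) := by
  refine ⟨2, by norm_num, ?_⟩
  intro α hα y η hy hη
  set a : ℝ := (α:ℝ) with hadef
  have ha1 : (1:ℝ) ≤ a := by rw [hadef]; exact_mod_cast hα
  have ha0 : (0:ℝ) < a := by linarith
  have hfa : (0:ℝ) < (Nat.factorial (2*α) : ℝ) := by exact_mod_cast Nat.factorial_pos _
  have hS : 0 < Real.sqrt ((2*α).factorial : ℝ) := Real.sqrt_pos.mpr hfa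
  set S : ℝ := Real.sqrt ((2*α).factorial : ℝ) with hSdef
  -- AM-GM step
  set p₁ : ℝ := (2*a+2)*y/(2*a+1) with hp₁def
  set p₂ : ℝ := (2*a+2)*η with hp₂def
  have hp₁ : 0 < p₁ := by rw [hp₁def]; positivity
  have hp₂ : 0 < p₂ := by rw [hp₂def]; positivity
  have hw : (2*a+1)/(2*a+2) + 1/(2*a+2) = 1 := by
    field_simp
    ring
  have amgm : p₁ ^ ((2*a+1)/(2*a+2)) * p₂ ^ (1/(2*a+2)) ≤ y + η := by
    have h := Real.geom_mean_le_arith_mean2_weighted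
      (by positivity) (by positivity) hp₁.le hp₂.le hw
    refine h.trans_eq ?_
    rw [hp₁def, hp₂def]
    field_simp
  have key : p₁ ^ (a + 1/2) * p₂ ^ ((1:ℝ)/2) ≤ (y+η) ^ (a+1) := by
    have h := Real.rpow_le_rpow (by positivity) amgm (by positivity : (0:ℝ) ≤ a+1)
    rw [Real.mul_rpow (by positivity) (by positivity),
      ← Real.rpow_mul hp₁.le, ← Real.rpow_mul hp₂.le] at h
    have e₁ : (2*a+1)/(2*a+2)*(a+1) = a + 1/2 := by field_simp
    have e₂ : 1/(2*a+2)*(a+1) = (1:ℝ)/2 := by field_simp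
    rwa [e₁, e₂] at h
  have hye : ((y+η)^(α+1) : ℝ) = (y+η) ^ (a+1 : ℝ) := by
    rw [hadef, ← Real.rpow_natCast (y+η) (α+1)]
    norm_num
  -- factorial bound
  have hfb := fact_sqrt_bound α hα
  -- rpow identities
  have two_pos : (0:ℝ) < 2 := by norm_num
  have h2 : (2:ℝ)^(a+1/2) * 2^((1:ℝ)/2) = 2 * 2^(a:ℝ) := by
    rw [← Real.rpow_add two_pos, show a+1/2+1/2 = 1+a by ring, Real.rpow_add two_pos,
      Real.rpow_one]
  have hη1 : η^(-(1/2):ℝ) * η^((1:ℝ)/2) = 1 := by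
    rw [← Real.rpow_add hη]; norm_num
  have ha4 : a^(-(1/4):ℝ) * a^((1:ℝ)/2) = a^((1:ℝ)/4) := by
    rw [← Real.rpow_add ha0]; norm_num
  have hpowα : ((2:ℝ)^α : ℝ) = (2:ℝ)^(a:ℝ) := (Real.rpow_natCast 2 α).symm
  have hsqrt2 : Real.sqrt 2 = (2:ℝ)^((1:ℝ)/2) := Real.sqrt_eq_rpow 2
  -- main chain
  rw [div_le_iff₀ (by positivity)]
  set K : ℝ := p₁^(a+1/2) * a^((1:ℝ)/4) * S with hKdef
  have hK : 0 < K := by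
    rw [hKdef]
    have := Real.rpow_pos_of_pos hp₁ (a+1/2)
    have := Real.rpow_pos_of_pos ha0 ((1:ℝ)/4)
    positivity
  have id1 : (2*y) ^ (a + 1/2) = ((2*a+1)/(a+1))^(a+1/2) * p₁^(a+1/2) := by
    rw [← Real.mul_rpow (by positivity) hp₁.le]
    congr 1
    rw [hp₁def]
    field_simp
  have ineq1 : ((2*a+1)/(a+1))^(a+1/2) ≤ (2:ℝ)^(a+1/2) := by
    apply Real.rpow_le_rpow (by positivity) _ (by positivity)
    rw [div_le_iff₀ (by linarith : (0:ℝ) < a+1)]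
    linarith
  have id2 : p₂ ^ ((1:ℝ)/2) = (2*a+2)^((1:ℝ)/2) * η^((1:ℝ)/2) := by
    rw [hp₂def, Real.mul_rpow (by positivity) hη.le]
  have ineq2 : (2:ℝ)^((1:ℝ)/2) * a^((1:ℝ)/2) ≤ (2*a+2)^((1:ℝ)/2) := by
    rw [← Real.mul_rpow two_pos.le ha0.le]
    exact Real.rpow_le_rpow (by positivity) (by linarith) (by norm_num)
  -- lower bound on RHS
  have hRHS : 2 * (2:ℝ)^((1:ℝ)/2) * K ≤
      2 * η ^ (-(1/2):ℝ) * a ^ (-(1/4):ℝ) * ((y+η)^(α+1) * S) := by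
    rw [hye]
    have step1 : 2 * η ^ (-(1/2):ℝ) * a ^ (-(1/4):ℝ) * ((p₁^(a+1/2) * p₂^((1:ℝ)/2)) * S) ≤
        2 * η ^ (-(1/2):ℝ) * a ^ (-(1/4):ℝ) * ((y+η)^(a+1) * S) := by
      have hc : 0 ≤ 2 * η ^ (-(1/2):ℝ) * a ^ (-(1/4):ℝ) := by positivity
      apply mul_le_mul_of_nonneg_left _ hc
      exact mul_le_mul_of_nonneg_right key hS.le
    refine le_trans ?_ step1
    rw [id2]
    have step2 : 2 * η ^ (-(1/2):ℝ) * a ^ (-(1/4):ℝ) *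
          ((p₁^(a+1/2) * ((2:ℝ)^((1:ℝ)/2) * a^((1:ℝ)/2) * η^((1:ℝ)/2))) * S) ≤
        2 * η ^ (-(1/2):ℝ) * a ^ (-(1/4):ℝ) *
          ((p₁^(a+1/2) * ((2*a+2)^((1:ℝ)/2) * η^((1:ℝ)/2))) * S) := by
      have hc : 0 ≤ 2 * η ^ (-(1/2):ℝ) * a ^ (-(1/4):ℝ) := by positivity
      apply mul_le_mul_of_nonneg_left _ hc
      apply mul_le_mul_of_nonneg_right _ hS.le
      apply mul_le_mul_of_nonneg_left _ (Real.rpow_nonneg hp₁.le _)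
      exact mul_le_mul_of_nonneg_right ineq2 (Real.rpow_nonneg hη.le _)
    refine le_trans (le_of_eq ?_) step2
    rw [hKdef]
    have : 2 * η ^ (-(1/2):ℝ) * a ^ (-(1/4):ℝ) *
          ((p₁^(a+1/2) * ((2:ℝ)^((1:ℝ)/2) * a^((1:ℝ)/2) * η^((1:ℝ)/2))) * S)
        = 2 * (2:ℝ)^((1:ℝ)/2) * (η ^ (-(1/2):ℝ) * η^((1:ℝ)/2)) *
          (a ^ (-(1/4):ℝ) * a^((1:ℝ)/2)) * p₁^(a+1/2) * S := by ring
    rw [this, hη1, ha4]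
    ring
  calc (2*y) ^ (a + 1/2) * (α.factorial : ℝ)
      ≤ (2*y) ^ (a + 1/2) * (Real.sqrt 2 * a^((1:ℝ)/4) * S / 2^α) := by
        apply mul_le_mul_of_nonneg_left hfb (Real.rpow_nonneg (by positivity) _)
    _ = (((2*a+1)/(a+1))^(a+1/2) * p₁^(a+1/2)) * (Real.sqrt 2 * a^((1:ℝ)/4) * S / 2^α) := by
        rw [id1]
    _ ≤ ((2:ℝ)^(a+1/2) * p₁^(a+1/2)) * (Real.sqrt 2 * a^((1:ℝ)/4) * S / 2^α) := by
        apply mul_le_mul_of_nonneg_right _ (by positivity)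
        exact mul_le_mul_of_nonneg_right ineq1 (Real.rpow_nonneg hp₁.le _)
    _ = 2 * K := by
        rw [hsqrt2, hpowα, hKdef]
        have h2a : (2:ℝ)^(a:ℝ) ≠ 0 := (Real.rpow_pos_of_pos two_pos a).ne'
        have h2' : (2:ℝ)^(a+1/2) * 2^((1:ℝ)/2) / 2^(a:ℝ) = 2 := by
          rw [h2]; field_simp
        calc ((2:ℝ)^(a+1/2) * p₁^(a+1/2)) * (2^((1:ℝ)/2) * a^((1:ℝ)/4) * S / 2^(a:ℝ))
            = ((2:ℝ)^(a+1/2) * 2^((1:ℝ)/2) / 2^(a:ℝ)) * (p₁^(a+1/2) * a^((1:ℝ)/4) * S) := by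
              ring
          _ = 2 * (p₁^(a+1/2) * a^((1:ℝ)/4) * S) := by rw [h2']
    _ ≤ 2 * (2:ℝ)^((1:ℝ)/2) * K := by
        have h12 : (1:ℝ) ≤ (2:ℝ)^((1:ℝ)/2) := by
          rw [← hsqrt2]
          nlinarith [Real.sq_sqrt (show (0:ℝ) ≤ 2 by norm_num), Real.sqrt_nonneg 2]
        nlinarith [hK]
    _ ≤ 2 * η ^ (-(1/2):ℝ) * a ^ (-(1/4):ℝ) * ((y+η)^(α+1) * S) := hRHS
end

section
/- Let H be a complex Hilbert space, F ∈ H, m ∈ ℕ, and (B_1, ..., B_m) an orthonormal family in H. Let ι be an index type, l a filter on ι, and Φ : ι → H a family of nonzero vectors such that ⟨F, Φ_t⟩/‖Φ_t‖ → 0 along l and, for each k ∈ {1,...,m}, ⟨B_k, Φ_t⟩/‖Φ_t‖ → 0 along l. Set β_t = Φ_t − Σ_{k=1}^m ⟨Φ_t, B_k⟩ B_k. Then eventually along l one has β_t ≠ 0, and |⟨F, β_t⟩|/‖β_t‖ → 0 along l; consequently ‖F − P_t F‖ → ‖F − P F‖ along l, where P is the orthogonal projection onto span{B_1,...,B_m}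 and P_t is the orthogonal projection onto span{B_1,...,B_m, Φ_t}. -/
/-!
The correction `Σ_k c_k B_k` subtracted from `Φ_t` has norm `o(‖Φ_t‖)`, so `β_t` is
asymptotically as long as `Φ_t` and `⟨F, β_t⟩ / ‖β_t‖ → 0`. For the distances, write
`span{B, Φ_t} = K ⊔ ℂ β'_t` with `K = span B` and `β'_t = Φ_t - P_K Φ_t ⊥ K`. Projecting onto
`(ℂ β'_t)ᗮ` is 1-Lipschitz and maps `K ⊔ ℂ β'_t` into `K`, so the distance from `F` to `K`
exceeds the distance to `K ⊔ ℂ β'_t` by at most the length `|⟨β'_t, F⟩| / ‖β'_t‖` of the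
component of `F` along `β'_t`, which tends to `0`.
-/

open Filter Topology Submodule

theorem Metric.infDist_le_infDist_add_dist_of_mapsTo {α : Type*} [PseudoMetricSpace α]
    {f : α → α} (hf : LipschitzWith 1 f) {s t : Set α} (hst : Set.MapsTo f s t)
    (hs : s.Nonempty) (x : α) :
    Metric.infDist x t ≤ Metric.infDist x s + dist x (f x) := by
  rw [← sub_le_iff_le_add, Metric.le_infDist hs]
  intro y hy
  calc Metric.infDist x t - dist x (f x) ≤ Metric.infDist (f x) t :=
        sub_le_iff_le_add.2 Metric.infDist_le_infDist_add_dist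
    _ ≤ dist (f x) (f y) := Metric.infDist_le_dist_of_mem (hst hy)
    _ ≤ dist x y := by simpa using hf.dist_le_mul x y

theorem tendsto_norm_sum_smul_div {ι κ 𝕜 E : Type*} [NormedField 𝕜] [SeminormedAddCommGroup E]
    [NormedSpace 𝕜 E] {l : Filter ι} {s : Finset κ} {c : ι → κ → 𝕜} {n : ι → ℝ} (v : κ → E)
    (hn : ∀ t, 0 ≤ n t) (hc : ∀ k ∈ s, Tendsto (fun t => ‖c t k‖ / n t) l (𝓝 0)) :
    Tendsto (fun t => ‖∑ k ∈ s, c t k • v k‖ / n t) l (𝓝 0) := by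
  have hbound : Tendsto (fun t => ∑ k ∈ s, ‖c t k‖ / n t * ‖v k‖) l (𝓝 0) := by
    simpa using tendsto_finsetSum s fun k hk => (hc k hk).mul_const ‖v k‖
  refine squeeze_zero (fun t => by have := hn t; positivity) (fun t => ?_) hbound
  calc ‖∑ k ∈ s, c t k • v k‖ / n t ≤ (∑ k ∈ s, ‖c t k‖ * ‖v k‖) / n t :=
        div_le_div_of_nonneg_right (norm_sum_le_of_le s fun k _ => (norm_smul _ _).le) (hn t)
    _ = ∑ k ∈ s, ‖c t k‖ / n t * ‖v k‖ := by simp only [Finset.sum_div, div_mul_eq_mul_div]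

section

variable {ι E : Type*} [NormedAddCommGroup E] {l : Filter ι} {Φ r : ι → E}

theorem tendsto_norm_sub_div_norm (hr : Tendsto (fun t => ‖r t‖ / ‖Φ t‖) l (𝓝 0))
    (hΦ : ∀ᶠ t in l, Φ t ≠ 0) : Tendsto (fun t => ‖Φ t - r t‖ / ‖Φ t‖) l (𝓝 1) := by
  have hlower : Tendsto (fun t => 1 - ‖r t‖ / ‖Φ t‖) l (𝓝 1) := by
    simpa using tendsto_const_nhds.sub hr
  have hupper : Tendsto (fun t => 1 + ‖r t‖ / ‖Φ t‖) l (𝓝 1) := by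
    simpa using tendsto_const_nhds.add hr
  refine tendsto_of_tendsto_of_tendsto_of_le_of_le' hlower hupper ?_ ?_ <;>
    filter_upwards [hΦ] with t ht <;>
    rw [← div_self (norm_ne_zero_iff.2 ht)]
  · rw [← sub_div]
    gcongr
    exact norm_sub_norm_le _ _
  · rw [← add_div]
    gcongr
    exact norm_sub_le _ _

theorem eventually_sub_ne_zero (hr : Tendsto (fun t => ‖r t‖ / ‖Φ t‖) l (𝓝 0))
    (hΦ : ∀ᶠ t in l, Φ t ≠ 0) : ∀ᶠ t in l, Φ t - r t ≠ 0 := by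
  filter_upwards [(tendsto_norm_sub_div_norm hr hΦ).eventually_ne one_ne_zero] with t ht h0
  simp [h0] at ht

theorem tendsto_norm_inner_sub_div_norm_sub {𝕜 : Type*} [RCLike 𝕜] [InnerProductSpace 𝕜 E]
    (x : E) (hr : Tendsto (fun t => ‖r t‖ / ‖Φ t‖) l (𝓝 0)) (hΦ : ∀ᶠ t in l, Φ t ≠ 0) (hx : Tendsto (fun t => ‖inner 𝕜 x (Φ t)‖ / ‖Φ t‖) l (𝓝 0)) :
    Tendsto (fun t => ‖inner 𝕜 x (Φ t - r t)‖ / ‖Φ t - r t‖) l (𝓝 0) := by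
  have hnum : Tendsto (fun t => ‖inner 𝕜 x (Φ t - r t)‖ / ‖Φ t‖) l (𝓝 0) := by
    refine squeeze_zero (fun t => by positivity) (fun t => ?_)
      (by simpa using hx.add (hr.const_mul ‖x‖))
    rw [mul_div_assoc', ← add_div]
    gcongr
    rw [inner_sub_right]
    exact (norm_sub_le _ _).trans (add_le_add_right (norm_inner_le_norm x (r t)) _)
  have hquot := hnum.div (tendsto_norm_sub_div_norm hr hΦ) one_ne_zero
  rw [zero_div] at hquot
  refine hquot.congr' ?_
  filter_upwards [hΦ] with t ht
  exact div_div_div_cancel_right₀ (norm_ne_zero_iff.2 ht) _ _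

end

namespace Submodule

theorem sup_span_singleton_sub_of_mem {R M : Type*} [Ring R] [AddCommGroup M] [Module R M]
    {K : Submodule R M} {p : M} (hp : p ∈ K) (x : M) : K ⊔ R ∙ (x - p) = K ⊔ R ∙ x := by
  apply le_antisymm <;> refine sup_le le_sup_left ((span_singleton_le_iff_mem _ _).2 ?_)
  · exact sub_mem (mem_sup_right (mem_span_singleton_self x)) (mem_sup_left hp)
  · simpa using add_mem (mem_sup_right (mem_span_singleton_self (x - p))) (mem_sup_left hp)

variable {𝕜 E : Type*} [RCLike 𝕜] [NormedAddCommGroup E] [InnerProductSpace 𝕜 E]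

theorem infDist_sub_norm_starProjection_le_infDist_sup {K L : Submodule 𝕜 E}
    [L.HasOrthogonalProjection] (hKL : K ≤ Lᗮ) (x : E) :
    Metric.infDist x K - ‖L.starProjection x‖ ≤ Metric.infDist x (K ⊔ L : Submodule 𝕜 E) := by
  have hmaps : Set.MapsTo Lᗮ.starProjection (K ⊔ L : Submodule 𝕜 E) K := by
    intro y hy
    obtain ⟨k, hk, l, hl, rfl⟩ := mem_sup.1 hy
    rw [map_add, starProjection_eq_self_iff.2 (hKL hk), starProjection_orthogonal_apply_eq_zero hl,
      add_zero]
    exact hk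
  have := Metric.infDist_le_infDist_add_dist_of_mapsTo Lᗮ.lipschitzWith_starProjection hmaps
    ⟨0, zero_mem _⟩ x
  rw [dist_eq_norm, starProjection_orthogonal_val, sub_sub_cancel] at this
  linarith

theorem norm_starProjection_span_singleton (v x : E) :
    ‖(𝕜 ∙ v).starProjection x‖ = ‖inner 𝕜 v x‖ / ‖v‖ := by
  rcases eq_or_ne v 0 with rfl | hv
  · simp
  rw [starProjection_singleton, norm_smul, norm_div, RCLike.norm_ofReal,
    abs_of_nonneg (by positivity)]
  field_simp

theorem tendsto_infDist_sup_span_singleton {ι : Type*} {l : Filter ι} (K : Submodule 𝕜 E)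
    {v : ι → E} (hvK : ∀ t, K ≤ (𝕜 ∙ v t)ᗮ) (x : E)
    (hv : Tendsto (fun t => ‖inner 𝕜 (v t) x‖ / ‖v t‖) l (𝓝 0)) :
    Tendsto (fun t => Metric.infDist x (K ⊔ 𝕜 ∙ v t : Submodule 𝕜 E)) l
      (𝓝 (Metric.infDist x K)) := by
  refine tendsto_of_tendsto_of_tendsto_of_le_of_le (by simpa using tendsto_const_nhds.sub hv)
    tendsto_const_nhds (fun t => ?_) (fun t => ?_)
  · simpa [norm_starProjection_span_singleton] using
      infDist_sub_norm_starProjection_le_infDist_sup (hvK t) x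
  · exact Metric.infDist_le_infDist_of_subset (SetLike.coe_mono le_sup_left) ⟨0, zero_mem _⟩

end Submodule

theorem approximation_error_tendsto_boundary_general
    {H : Type*} [NormedAddCommGroup H] [InnerProductSpace ℂ H]
    (F : H) (m : ℕ) (B : Fin m → H) (hB : Orthonormal ℂ B)
    {ι : Type*} (l : Filter ι) (Φ : ι → H) (hΦ : ∀ t, Φ t ≠ 0)
    (hF : Tendsto (fun t => (inner ℂ F (Φ t) : ℂ) / (‖Φ t‖ : ℂ)) l (nhds 0))
    (hBk : ∀ k : Fin m,
      Tendsto (fun t => (inner ℂ (B k) (Φ t) : ℂ) / (‖Φ t‖ : ℂ)) l (nhds 0)) :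
    (∀ᶠ t in l, Φ t - ∑ k, (inner ℂ (Φ t) (B k) : ℂ) • B k ≠ 0) ∧
    Tendsto (fun t => ‖(inner ℂ F (Φ t - ∑ k, (inner ℂ (Φ t) (B k) : ℂ) • B k) : ℂ)‖ /
        ‖Φ t - ∑ k, (inner ℂ (Φ t) (B k) : ℂ) • B k‖) l (nhds 0) ∧
    Tendsto (fun t =>
        Metric.infDist F (Submodule.span ℂ (Set.range B ∪ {Φ t}) : Set H)) l
      (nhds (Metric.infDist F (Submodule.span ℂ (Set.range B) : Set H))) := by
  have hΦ' : ∀ᶠ t in l, Φ t ≠ 0 := Eventually.of_forall hΦ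
  have hFΦ : Tendsto (fun t => ‖inner ℂ F (Φ t)‖ / ‖Φ t‖) l (𝓝 0) := by simpa using hF.norm
  have hBΦ (k : Fin m) : Tendsto (fun t => ‖inner ℂ (B k) (Φ t)‖ / ‖Φ t‖) l (𝓝 0) := by
    simpa using (hBk k).norm
  have hr : Tendsto (fun t => ‖∑ k, inner ℂ (Φ t) (B k) • B k‖ / ‖Φ t‖) l (𝓝 0) :=
    tendsto_norm_sum_smul_div B (fun t => norm_nonneg _) fun k _ => by
      simpa only [norm_inner_symm] using hBΦ k
  -- Mathlib's inner product is conjugate-linear on the left, so `β_t` above is not orthogonal to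
  -- `span B`; the orthogonal residual `β'_t` uses the coefficients `⟪B k, Φ t⟫` instead.
  have hr' : Tendsto (fun t => ‖∑ k, inner ℂ (B k) (Φ t) • B k‖ / ‖Φ t‖) l (𝓝 0) :=
    tendsto_norm_sum_smul_div B (fun t => norm_nonneg _) fun k _ => hBΦ k
  refine ⟨eventually_sub_ne_zero hr hΦ', tendsto_norm_inner_sub_div_norm_sub F hr hΦ' hFΦ, ?_⟩
  set K := span ℂ (Set.range B)
  have hspan (t : ι) :
      span ℂ (Set.range B ∪ {Φ t}) = K ⊔ ℂ ∙ (Φ t - ∑ k, inner ℂ (B k) (Φ t) • B k) := by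
    rw [span_union, sup_span_singleton_sub_of_mem
      (sum_mem fun k _ => smul_mem _ _ (subset_span (Set.mem_range_self k)))]
  have horth (t : ι) : K ≤ (ℂ ∙ (Φ t - ∑ k, inner ℂ (B k) (Φ t) • B k))ᗮ :=
    span_le.2 <| Set.range_subset_iff.2 fun j => mem_orthogonal_singleton_iff_inner_left.2 <| by
      simp [inner_sub_right, hB.inner_right_fintype]
  simp only [hspan]
  exact tendsto_infDist_sup_span_singleton K horth F <| by
    simpa only [norm_inner_symm] using tendsto_norm_inner_sub_div_norm_sub F hr' hΦ' hFΦ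

/-- Abstract existence lemma for the minimization step (Lemma `re-ex-lem`): if `(B_1,…,B_m)`
is an orthonormal family in a complex Hilbert space `H`, `Φ : ι → H` is a family of nonzero
vectors with `⟨F, Φ_t⟩/‖Φ_t‖ → 0` and `⟨B_k, Φ_t⟩/‖Φ_t‖ → 0` along a filter `l`, and
`β_t = Φ_t − Σ_k ⟨Φ_t, B_k⟩ B_k`, then eventually `β_t ≠ 0`, `|⟨F, β_t⟩|/‖β_t‖ → 0`, and the
distance from `F` to `span{B_1,…,B_m,Φ_t}` tends to the distance from `F` to
`span{B_1,…,B_m}` (distances to spans = norms of the orthogonal-projection errors). -/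
theorem approximation_error_tendsto_boundary
    {H : Type*} [NormedAddCommGroup H] [InnerProductSpace ℂ H] [CompleteSpace H]
    (F : H) (m : ℕ) (B : Fin m → H) (hB : Orthonormal ℂ B)
    {ι : Type*} (l : Filter ι) (Φ : ι → H) (hΦ : ∀ t, Φ t ≠ 0)
    (hF : Tendsto (fun t => (inner ℂ F (Φ t) : ℂ) / (‖Φ t‖ : ℂ)) l (nhds 0))
    (hBk : ∀ k : Fin m,
      Tendsto (fun t => (inner ℂ (B k) (Φ t) : ℂ) / (‖Φ t‖ : ℂ)) l (nhds 0)) :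
    (∀ᶠ t in l, Φ t - ∑ k, (inner ℂ (Φ t) (B k) : ℂ) • B k ≠ 0) ∧
    Tendsto (fun t => ‖(inner ℂ F (Φ t - ∑ k, (inner ℂ (Φ t) (B k) : ℂ) • B k) : ℂ)‖ /
        ‖Φ t - ∑ k, (inner ℂ (Φ t) (B k) : ℂ) • B k‖) l (nhds 0) ∧
    Tendsto (fun t =>
        Metric.infDist F (Submodule.span ℂ (Set.range B ∪ {Φ t}) : Set H)) l
      (nhds (Metric.infDist F (Submodule.span ℂ (Set.range B) : Set H))) :=
  approximation_error_tendsto_boundary_general F m B hB l Φ hΦ hF hBk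
end

section
/- Let H be a complex Hilbert space, D ⊆ H a set of unit vectors, and M > 0. Suppose F ∈ H can be written as F = Σ_{j=1}^∞ c_j g_j with g_j ∈ D and Σ_{j=1}^∞ |c_j| ≤ M (the series converging in H). Let (B_k)_{k≥1} be an orthonormal sequence in H such that for every m ≥ 1, writing F_m = F − Σ_{k=1}^{m−1} ⟨F, B_k⟩ B_k, one has |⟨F_m, B_m⟩| ≥ |⟨F_m, g⟩| for every g ∈ D. Then for every m ≥ 1, ‖F − Σ_{k=1}^m ⟨F, B_k⟩ B_k‖ ≤ M/√m. -/
/-!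
Write `r m` for the residual and `d k = ⟪F, B k⟫`. Pairing the expansion `F = ∑ c j • g j` with
`r m` and using the selection principle gives `‖⟪r m, F⟫‖ ≤ M ‖d m‖`. Since the inner product is
conjugate-linear in its first argument, `d k` is the conjugate of the Fourier coefficient
`⟪B k, F⟫`, so `r m` is a priori not the residual of an orthogonal projection. However Bessel's
inequality gives `re ⟪r m, F⟫ ≥ 2 ∑_{k<m} (im d k)²`, and `d m → 0`, so all `d k` are real.
Then `‖r m‖² = re ⟪r m, F⟫ ≤ M ‖d m‖` and `‖r (m+1)‖² = ‖r m‖² - ‖d m‖²`, so `a m = ‖r m‖²`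
satisfies `a m ^ 2 ≤ M² (a m - a (m+1))` and `a 0 ≤ M²`, which forces `a m ≤ M² / (m + 1)`.
-/

open Finset Filter Topology RCLike ComplexConjugate

theorem mul_add_one_le_of_sq_le_mul_sub {a : ℕ → ℝ} {C : ℝ} (hC : 0 < C) (h0 : a 0 ≤ C)
    (hstep : ∀ n, a n ^ 2 ≤ C * (a n - a (n + 1))) (n : ℕ) : a n * (n + 1) ≤ C := by
  induction n with
  | zero => simpa using h0
  | succ n ih =>
    have hCa : 0 ≤ C - a n := by nlinarith
    -- `(n + 2) a (C - a) ≤ C (C - a) + a (C - a) = C² - a²` with `a = a n`, by `(n + 1) a ≤ C`.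
    have key : C * (a (n + 1) * (n + 1 + 1)) ≤ C * C := by
      nlinarith [hstep n, mul_nonneg (sub_nonneg.2 ih) hCa, sq_nonneg (a n)]
    push_cast
    exact le_of_mul_le_mul_left key hC

theorem norm_inner_le_of_hasSum {𝕜 E ι : Type*} [RCLike 𝕜] [NormedAddCommGroup E]
    [InnerProductSpace 𝕜 E] {c : ι → 𝕜} {g : ι → E} {F x : E} {S b : ℝ}
    (hF : HasSum (fun j => c j • g j) F) (hS : HasSum (fun j => ‖c j‖) S)
    (hb : ∀ j, ‖inner 𝕜 x (g j)‖ ≤ b) : ‖inner 𝕜 x F‖ ≤ S * b := by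
  refine (hF.mapL (innerSL 𝕜 x)).norm_le_of_bounded (hS.mul_right b) fun j => ?_
  rw [innerSL_apply_apply, inner_smul_right, norm_mul]
  exact mul_le_mul_of_nonneg_left (hb j) (norm_nonneg _)

namespace AFD

variable {𝕜 E : Type*} [RCLike 𝕜] [NormedAddCommGroup E] [InnerProductSpace 𝕜 E]

local notation "⟪" x ", " y "⟫" => inner 𝕜 x y

variable (𝕜) in
def residual (F : E) (B : ℕ → E) (m : ℕ) : E := F - ∑ k ∈ range m, ⟪F, B k⟫ • B k

variable {B : ℕ → E} (F : E)

theorem residual_zero : residual 𝕜 F B 0 = F := by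
  simp only [residual, range_zero, sum_empty, sub_zero]

theorem residual_succ (m : ℕ) :
    residual 𝕜 F B (m + 1) = residual 𝕜 F B m - ⟪F, B m⟫ • B m := by
  simp only [residual, sum_range_succ, sub_sub]

theorem re_inner_residual_left (m : ℕ) :
    re ⟪residual 𝕜 F B m, F⟫ =
      ‖F‖ ^ 2 - ∑ k ∈ range m, ‖⟪F, B k⟫‖ ^ 2 + 2 * ∑ k ∈ range m, im ⟪F, B k⟫ ^ 2 := by
  have hterm (k : ℕ) :
      re (conj ⟪F, B k⟫ * ⟪B k, F⟫) = ‖⟪F, B k⟫‖ ^ 2 - 2 * im ⟪F, B k⟫ ^ 2 := by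
    rw [← inner_conj_symm (B k) F, mul_re, conj_re, conj_im, norm_sq_eq_def]
    ring
  simp only [residual, inner_sub_left, sum_inner, inner_smul_left, map_sub, map_sum, hterm,
    sum_sub_distrib, ← mul_sum, inner_self_eq_norm_sq_to_K]
  norm_cast
  ring

variable (hB : Orthonormal 𝕜 B)
include hB

theorem inner_residual_self_index (m : ℕ) : ⟪residual 𝕜 F B m, B m⟫ = ⟪F, B m⟫ := by
  have hortho : ⟪∑ k ∈ range m, ⟪F, B k⟫ • B k, B m⟫ = 0 := by
    rw [sum_inner]
    exact sum_eq_zero fun k hk => by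
      rw [inner_smul_left, hB.inner_eq_zero (mem_range.1 hk).ne, mul_zero]
  rw [residual, inner_sub_left, hortho, sub_zero]

theorem two_mul_sum_im_sq_le_re_inner_residual (m : ℕ) :
    2 * ∑ k ∈ range m, im ⟪F, B k⟫ ^ 2 ≤ re ⟪residual 𝕜 F B m, F⟫ := by
  have hbessel : ∑ k ∈ range m, ‖⟪F, B k⟫‖ ^ 2 ≤ ‖F‖ ^ 2 := by
    simpa only [norm_inner_symm] using hB.sum_inner_products_le F
  rw [re_inner_residual_left]
  linarith

theorem im_inner_eq_zero_of_norm_inner_residual_le {M : ℝ}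
    (hsel : ∀ m, ‖⟪residual 𝕜 F B m, F⟫‖ ≤ M * ‖⟪F, B m⟫‖) (k : ℕ) : im ⟪F, B k⟫ = 0 := by
  have hcoeff : Tendsto (fun m => M * ‖⟪F, B m⟫‖) atTop (𝓝 0) := by
    have hsq := (hB.inner_products_summable F).tendsto_atTop_zero.sqrt
    simp only [norm_inner_symm, Real.sqrt_sq (norm_nonneg _), Real.sqrt_zero] at hsq
    simpa using hsq.const_mul M
  have hbound : ∀ m ≥ k + 1, 2 * im ⟪F, B k⟫ ^ 2 ≤ M * ‖⟪F, B m⟫‖ := fun m hm =>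
    calc 2 * im ⟪F, B k⟫ ^ 2 ≤ 2 * ∑ j ∈ range m, im ⟪F, B j⟫ ^ 2 := by
          gcongr
          exact single_le_sum (f := fun j => im ⟪F, B j⟫ ^ 2) (fun j _ => sq_nonneg _)
            (mem_range.2 hm)
      _ ≤ re ⟪residual 𝕜 F B m, F⟫ := two_mul_sum_im_sq_le_re_inner_residual F hB m
      _ ≤ ‖⟪residual 𝕜 F B m, F⟫‖ := re_le_norm _
      _ ≤ M * ‖⟪F, B m⟫‖ := hsel m
  have hle : 2 * im ⟪F, B k⟫ ^ 2 ≤ 0 :=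
    ge_of_tendsto hcoeff (eventually_atTop.2 ⟨k + 1, hbound⟩)
  nlinarith [sq_nonneg (im ⟪F, B k⟫)]

theorem inner_residual_eq_zero_of_lt (hreal : ∀ k, im ⟪F, B k⟫ = 0) {j m : ℕ} (hjm : j < m) :
    ⟪residual 𝕜 F B m, B j⟫ = 0 := by
  rw [residual, inner_sub_left, hB.inner_left_sum _ (mem_range.2 hjm),
    conj_eq_iff_im.2 (hreal j), sub_self]

theorem norm_residual_sq (hreal : ∀ k, im ⟪F, B k⟫ = 0) (m : ℕ) :
    ‖residual 𝕜 F B m‖ ^ 2 = re ⟪residual 𝕜 F B m, F⟫ := by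
  have hortho : ⟪residual 𝕜 F B m, ∑ k ∈ range m, ⟪F, B k⟫ • B k⟫ = 0 := by
    rw [inner_sum]
    exact sum_eq_zero fun k hk => by
      rw [inner_smul_right, inner_residual_eq_zero_of_lt F hB hreal (mem_range.1 hk), mul_zero]
  have hself : ⟪residual 𝕜 F B m, residual 𝕜 F B m⟫ = ⟪residual 𝕜 F B m, F⟫ := by
    rw [residual, inner_sub_right, ← residual, hortho, sub_zero]
  rw [@norm_sq_eq_re_inner 𝕜, hself]

theorem norm_residual_succ_sq (hreal : ∀ k, im ⟪F, B k⟫ = 0) (m : ℕ) :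
    ‖residual 𝕜 F B (m + 1)‖ ^ 2 = ‖residual 𝕜 F B m‖ ^ 2 - ‖⟪F, B m⟫‖ ^ 2 := by
  have hpyth := norm_add_sq_eq_norm_sq_add_norm_sq_of_inner_eq_zero (residual 𝕜 F B (m + 1))
    (⟪F, B m⟫ • B m) (by
      rw [inner_smul_right, inner_residual_eq_zero_of_lt F hB hreal (lt_add_one m), mul_zero])
  have hsplit : residual 𝕜 F B (m + 1) + ⟪F, B m⟫ • B m = residual 𝕜 F B m := by
    rw [residual_succ, sub_add_cancel]
  rw [hsplit, norm_smul, hB.norm_eq_one, mul_one] at hpyth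
  rw [sq, sq, sq]
  linarith

theorem norm_residual_sq_mul_le {M : ℝ} (hM : 0 < M) (hF : ‖F‖ ≤ M)
    (hsel : ∀ m, ‖⟪residual 𝕜 F B m, F⟫‖ ≤ M * ‖⟪F, B m⟫‖) (m : ℕ) :
    ‖residual 𝕜 F B m‖ ^ 2 * (m + 1) ≤ M ^ 2 := by
  have hreal := im_inner_eq_zero_of_norm_inner_residual_le F hB hsel
  refine mul_add_one_le_of_sq_le_mul_sub (a := fun n => ‖residual 𝕜 F B n‖ ^ 2) (pow_pos hM 2)
    ?_ (fun n => ?_) m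
  · rw [residual_zero]
    exact pow_le_pow_left₀ (norm_nonneg F) hF 2
  · have hle : ‖residual 𝕜 F B n‖ ^ 2 ≤ M * ‖⟪F, B n⟫‖ := by
      rw [norm_residual_sq F hB hreal]
      exact (re_le_norm _).trans (hsel n)
    rw [norm_residual_succ_sq F hB hreal, sub_sub_cancel, ← mul_pow]
    exact pow_le_pow_left₀ (by positivity) hle 2

end AFD

theorem afd_convergence_rate_general
    {H : Type*} [NormedAddCommGroup H] [InnerProductSpace ℂ H]
    (D : Set H) (hD : ∀ g ∈ D, ‖g‖ = 1) (M : ℝ) (hM : 0 < M)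
    (F : H) (c : ℕ → ℂ) (g : ℕ → H) (hg : ∀ j, g j ∈ D)
    (hFsum : HasSum (fun j => c j • g j) F)
    (hc : Summable fun j => ‖c j‖) (hcM : (∑' j, ‖c j‖) ≤ M)
    (B : ℕ → H) (hB : Orthonormal ℂ B)
    (hsel : ∀ m : ℕ, ∀ g' ∈ D,
      ‖(inner ℂ (F - ∑ k ∈ Finset.range m, (inner ℂ F (B k) : ℂ) • B k) g' : ℂ)‖ ≤
        ‖(inner ℂ (F - ∑ k ∈ Finset.range m, (inner ℂ F (B k) : ℂ) • B k) (B m) : ℂ)‖) :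
    ∀ m : ℕ, 1 ≤ m →
      ‖F - ∑ k ∈ Finset.range m, (inner ℂ F (B k) : ℂ) • B k‖ ≤ M / Real.sqrt m := by
  intro m hm
  have hF : ‖F‖ ≤ M := (hFsum.norm_le_of_bounded hc.hasSum fun j => by
    rw [norm_smul, hD _ (hg j), mul_one]).trans hcM
  have hsel' (n : ℕ) : ‖inner ℂ (AFD.residual ℂ F B n) F‖ ≤ M * ‖inner ℂ F (B n)‖ := by
    calc ‖inner ℂ (AFD.residual ℂ F B n) F‖
        ≤ (∑' j, ‖c j‖) * ‖inner ℂ (AFD.residual ℂ F B n) (B n)‖ :=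
          norm_inner_le_of_hasSum hFsum hc.hasSum fun j => hsel n _ (hg j)
      _ ≤ M * ‖inner ℂ F (B n)‖ := by rw [AFD.inner_residual_self_index F hB n]; gcongr
  have hdecay := AFD.norm_residual_sq_mul_le F hB hM hF hsel' m
  change ‖AFD.residual ℂ F B m‖ ≤ M / Real.sqrt m
  rw [le_div_iff₀ (by positivity)]
  refine (pow_le_pow_iff_left₀ (by positivity) hM.le two_ne_zero).1 ?_
  rw [mul_pow, Real.sq_sqrt (Nat.cast_nonneg m)]
  nlinarith [sq_nonneg ‖AFD.residual ℂ F B m‖]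

/-- Convergence rate of the AFD-type (pre-orthogonal greedy) approximation, abstract form:
if `F = Σ_j c_j g_j` with the `g_j` unit vectors from a dictionary `D` and `Σ_j |c_j| ≤ M`,
and `(B_k)` is an orthonormal sequence such that at each step the maximal selection
principle `|⟨F_m, B_m⟩| ≥ sup_{g ∈ D} |⟨F_m, g⟩|` holds for the residual
`F_m = F − Σ_{k<m} ⟨F, B_k⟩ B_k`, then `‖F − Σ_{k<m} ⟨F, B_k⟩ B_k‖ ≤ M/√m` for all `m ≥ 1`. -/
theorem afd_convergence_rate
    {H : Type*} [NormedAddCommGroup H] [InnerProductSpace ℂ H] [CompleteSpace H]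
    (D : Set H) (hD : ∀ g ∈ D, ‖g‖ = 1) (M : ℝ) (hM : 0 < M)
    (F : H) (c : ℕ → ℂ) (g : ℕ → H) (hg : ∀ j, g j ∈ D)
    (hFsum : HasSum (fun j => c j • g j) F)
    (hc : Summable fun j => ‖c j‖) (hcM : (∑' j, ‖c j‖) ≤ M)
    (B : ℕ → H) (hB : Orthonormal ℂ B)
    (hsel : ∀ m : ℕ, ∀ g' ∈ D,
      ‖(inner ℂ (F - ∑ k ∈ Finset.range m, (inner ℂ F (B k) : ℂ) • B k) g' : ℂ)‖ ≤
        ‖(inner ℂ (F - ∑ k ∈ Finset.range m, (inner ℂ F (B k) : ℂ) • B k) (B m) : ℂ)‖) :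
    ∀ m : ℕ, 1 ≤ m →
      ‖F - ∑ k ∈ Finset.range m, (inner ℂ F (B k) : ℂ) • B k‖ ≤ M / Real.sqrt m :=
  afd_convergence_rate_general D hD M hM F c g hg hFsum hc hcM B hB hsel
end

section
/- Let Γ be a regular cone in ℝ² and let β be a point of the topological boundary of Γ. Then ∫_{Γ*} e^{−4π y·t} dt → ∞ as y → β with y ∈ Γ: for every M > 0 there is δ > 0 such that for all y ∈ Γ with |y − β| < δ, ∫_{Γ*} e^{−4π y·t} dt ≥ M. -/
/-!
A supporting line of the open convex cone `Γ` at `β ∈ ∂Γ` gives `t₁ ∈ Γ* \ {0}` with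
`β · t₁ = 0`. As `Γ*` has an interior point, it contains a tube of fixed radius around a ray
parallel to `t₁`; the tube has infinite area and `t ↦ β · t` is bounded on it, so
`∫_{Γ*} e^{-4π β·t} dt = ∞`. By Fatou's lemma `y ↦ ∫_{Γ*} e^{-4π y·t} dt` is lower
semicontinuous, hence large near `β`. For `y ∈ Γ` the integral converges, because
`y · t ≥ r |t|` on `Γ*` when the closed ball of radius `r` about `y` lies in `Γ`.
-/

open MeasureTheory

/-- The dual cone `Γ* = {t : x·t ≥ 0 for all x ∈ Γ}` of a set `Γ ⊆ ℝⁿ`. -/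
def dualCone {n : ℕ} (Γ : Set (EuclideanSpace ℝ (Fin n))) : Set (EuclideanSpace ℝ (Fin n)) :=
  {t | ∀ x ∈ Γ, 0 ≤ ∑ j, x j * t j}

open Filter Metric Topology ProperCone
open scoped ENNReal RealInnerProductSpace

theorem lowerSemicontinuous_lintegral {X α : Type*} [TopologicalSpace X]
    [FirstCountableTopology X] [MeasurableSpace α] {μ : Measure α} {F : X → α → ℝ≥0∞}
    (hmeas : ∀ x, AEMeasurable (F x) μ) (hF : ∀ a, LowerSemicontinuous (F · a)) :
    LowerSemicontinuous fun x => ∫⁻ a, F x a ∂μ := by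
  refine lowerSemicontinuous_iff_le_liminf.2 fun x => ?_
  calc ∫⁻ a, F x a ∂μ ≤ ∫⁻ a, liminf (F · a) (𝓝 x) ∂μ :=
        lintegral_mono fun a => lowerSemicontinuous_iff_le_liminf.1 (hF a) x
    _ ≤ liminf (fun y => ∫⁻ a, F y a ∂μ) (𝓝 x) := lintegral_liminf_le' hmeas

theorem nonpos_and_nonneg_of_forall_pos_mul_lt {c d : ℝ} (h : ∀ s : ℝ, 0 < s → s * c < d) :
    c ≤ 0 ∧ 0 ≤ d := by
  constructor
  · by_contra! hc
    have := h ((|d| + 1) / c) (by positivity)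
    rw [div_mul_cancel₀ _ hc.ne'] at this
    linarith [le_abs_self d]
  · by_contra! hd
    have hc : c < 0 := by linarith [h 1 one_pos]
    have := h (d / c) (div_pos_of_neg_of_neg hd hc)
    rw [div_mul_cancel₀ _ hc.ne] at this
    exact lt_irrefl _ this

theorem exists_convexCone_coe_eq {E : Type*} [AddCommGroup E] [Module ℝ E] {Γ : Set E}
    (hΓ : ∀ x ∈ Γ, ∀ y ∈ Γ, ∀ a b : ℝ, 0 < a → 0 < b → a • x + b • y ∈ Γ) :
    ∃ C : ConvexCone ℝ E, (C : Set E) = Γ :=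
  ⟨{ carrier := Γ
     smul_mem' := fun c hc x hx => by
       simpa [← add_smul] using hΓ x hx x hx (c / 2) (c / 2) (by positivity) (by positivity)
     add_mem' := fun x hx y hy => by simpa using hΓ x hx y hy 1 1 one_pos one_pos }, rfl⟩

section NormedSpace

variable {E : Type*} [NormedAddCommGroup E] [NormedSpace ℝ E] [MeasurableSpace E] [BorelSpace E]
  (μ : Measure E) [μ.IsAddHaarMeasure]

theorem measure_iUnion_ball_add_smul_eq_top (u v : E) {ε : ℝ} (hε : 0 < ε) (hv : 2 * ε ≤ ‖v‖) :
    μ (⋃ k : ℕ, ball (u + (k : ℝ) • v) ε) = ∞ := by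
  have hdisj : Pairwise (Function.onFun Disjoint fun k : ℕ => ball (u + (k : ℝ) • v) ε) := by
    intro k j hkj
    apply ball_disjoint_ball
    have hkj' : (1 : ℝ) ≤ |(k : ℝ) - j| := by
      have hkj : (k : ℤ) - j ≠ 0 := sub_ne_zero.2 (by exact_mod_cast hkj)
      exact_mod_cast Int.one_le_abs hkj
    rw [dist_eq_norm, add_sub_add_left_eq_sub, ← sub_smul, norm_smul, Real.norm_eq_abs]
    nlinarith [norm_nonneg v]
  rw [measure_iUnion hdisj fun _ => measurableSet_ball]
  simp_rw [Measure.addHaar_ball_center]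
  exact ENNReal.tsum_const_eq_top_of_ne_zero (measure_ball_pos μ 0 hε).ne'

end NormedSpace

section InnerProductSpace

variable {E : Type*} [NormedAddCommGroup E] [InnerProductSpace ℝ E]

theorem ConvexCone.exists_mem_innerDual_inner_eq_zero_of_mem_frontier [CompleteSpace E]
    (C : ConvexCone ℝ E) (hC : IsOpen (C : Set E)) {β : E} (hβ : β ∈ frontier (C : Set E)) :
    ∃ t ∈ innerDual (C : Set E), t ≠ 0 ∧ ⟪β, t⟫ = 0 := by
  obtain ⟨f, hf⟩ := geometric_hahn_banach_open_point C.convex hC fun h =>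
    hβ.2 (hC.interior_eq.symm ▸ h)
  have hsign (x : E) (hx : x ∈ C) : f x ≤ 0 ∧ 0 ≤ f β :=
    nonpos_and_nonneg_of_forall_pos_mul_lt fun s hs => by
      simpa using hf _ (C.smul_mem hs hx)
  obtain ⟨x₀, hx₀⟩ := closure_nonempty_iff.1 ⟨β, hβ.1⟩
  have hfβ : f β = 0 := le_antisymm
    (closure_minimal (fun x hx => (hsign x hx).1) (isClosed_le f.continuous continuous_const) hβ.1)
    (hsign x₀ hx₀).2
  have hinner (x : E) : ⟪x, -(InnerProductSpace.toDual ℝ E).symm f⟫ = -f x := by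
    rw [inner_neg_right, real_inner_comm, InnerProductSpace.toDual_symm_apply]
  refine ⟨-(InnerProductSpace.toDual ℝ E).symm f, mem_innerDual.2 fun x hx => ?_, fun h => ?_, ?_⟩
  · rw [hinner, neg_nonneg]
    exact (hsign x hx).1
  · have := hinner x₀
    rw [h, inner_zero_right] at this
    linarith [hf x₀ hx₀]
  · rw [hinner, hfβ, neg_zero]

theorem ball_add_smul_subset_innerDual [CompleteSpace E] {Γ : Set E} {u v : E} {ε s : ℝ}
    (hu : ball u ε ⊆ innerDual Γ) (hv : v ∈ innerDual Γ) (hs : 0 ≤ s) :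
    ball (u + s • v) ε ⊆ innerDual Γ := by
  refine fun t ht => mem_innerDual.2 fun x hx => ?_
  have hsub : t - s • v ∈ ball u ε := by
    rwa [mem_ball, dist_eq_norm, sub_sub, add_comm, ← dist_eq_norm]
  rw [← sub_add_cancel t (s • v), inner_add_right, inner_smul_right]
  exact add_nonneg (mem_innerDual.1 (hu hsub) hx) (mul_nonneg hs (mem_innerDual.1 hv hx))

theorem mul_norm_le_inner_of_closedBall_subset [CompleteSpace E] {Γ : Set E} {y t : E} {r : ℝ}
    (hr : 0 ≤ r) (hy : closedBall y r ⊆ Γ) (ht : t ∈ innerDual Γ) : r * ‖t‖ ≤ ⟪y, t⟫ := by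
  rcases eq_or_ne t 0 with rfl | ht0
  · simp
  have hx : y - (r / ‖t‖) • t ∈ closedBall y r := by
    rw [mem_closedBall, dist_eq_norm, sub_sub_cancel_left, norm_neg, norm_smul,
      Real.norm_of_nonneg (by positivity), div_mul_cancel₀ _ (norm_ne_zero_iff.2 ht0)]
  have := mem_innerDual.1 ht (hy hx)
  rw [inner_sub_left, real_inner_smul_left, real_inner_self_eq_norm_sq] at this
  have hrt : r / ‖t‖ * ‖t‖ ^ 2 = r * ‖t‖ := by field_simp
  linarith

theorem lowerSemicontinuous_setLIntegral_exp_neg_inner [MeasurableSpace E] [OpensMeasurableSpace E]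
    (μ : Measure E) (s : Set E) :
    LowerSemicontinuous fun y => ∫⁻ t in s, ENNReal.ofReal (Real.exp (-⟪y, t⟫)) ∂μ :=
  lowerSemicontinuous_lintegral (fun _ => by fun_prop) fun t =>
    (ENNReal.continuous_ofReal.comp (by fun_prop)).lowerSemicontinuous

variable [MeasurableSpace E] [BorelSpace E] [FiniteDimensional ℝ E]
  (μ : Measure E) [μ.IsAddHaarMeasure]

theorem integrable_exp_neg_mul_norm {a : ℝ} (ha : 0 < a) :
    Integrable (fun t : E => Real.exp (-(a * ‖t‖))) μ := by
  set l := μ.integrablePower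
  have hdecay (t : E) : ‖t‖ ^ (0 + l) * ‖Real.exp (-(a * ‖t‖))‖ ≤ l.factorial / a ^ l := by
    have := Real.pow_div_factorial_le_exp (x := a * ‖t‖) (mul_nonneg ha.le (norm_nonneg t)) l
    rw [Real.norm_of_nonneg (Real.exp_nonneg _), Real.exp_neg, zero_add, ← div_eq_mul_inv,
      div_le_div_iff₀ (Real.exp_pos _) (by positivity)]
    rw [div_le_iff₀ (by positivity), mul_pow] at this
    linarith
  have hbound (t : E) : ‖Real.exp (-(a * ‖t‖))‖ ≤ 1 := by
    rw [Real.norm_of_nonneg (Real.exp_nonneg _), Real.exp_le_one_iff, neg_nonpos]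
    positivity
  simpa using integrable_of_le_of_pow_mul_le hbound hdecay (by fun_prop)

theorem setLIntegral_innerDual_exp_neg_inner_eq_top {Γ : Set E}
    (hreg : (interior (innerDual Γ : Set E)).Nonempty) {β t₁ : E} (ht₁ : t₁ ∈ innerDual Γ)
    (ht₁0 : t₁ ≠ 0) (hβ : ⟪β, t₁⟫ = 0) :
    ∫⁻ t in innerDual Γ, ENNReal.ofReal (Real.exp (-⟪β, t⟫)) ∂μ = ∞ := by
  refine top_le_iff.1 ?_
  obtain ⟨u, hu⟩ := hreg
  obtain ⟨ε, hε, hball⟩ := Metric.isOpen_iff.1 isOpen_interior u hu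
  set v := (2 * ε / ‖t₁‖) • t₁
  have hv : ‖v‖ = 2 * ε := by
    rw [norm_smul, Real.norm_of_nonneg (by positivity), div_mul_cancel₀ _ (norm_ne_zero_iff.2 ht₁0)]
  have hvΓ : v ∈ innerDual Γ := (innerDual Γ).smul_mem ht₁ (by positivity)
  set T := ⋃ k : ℕ, ball (u + (k : ℝ) • v) ε
  have hT : T ⊆ innerDual Γ := Set.iUnion_subset fun k =>
    ball_add_smul_subset_innerDual (hball.trans interior_subset) hvΓ k.cast_nonneg
  have hbound (t : E) (ht : t ∈ T) :
      ENNReal.ofReal (Real.exp (-(‖β‖ * (‖u‖ + ε)))) ≤ ENNReal.ofReal (Real.exp (-⟪β, t⟫)) := by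
    obtain ⟨k, hk⟩ := Set.mem_iUnion.1 ht
    have hinner : ⟪β, t⟫ = ⟪β, t - (k : ℝ) • v⟫ := by
      rw [inner_sub_right, inner_smul_right, inner_smul_right, hβ]; ring
    have hnorm : ‖t - (k : ℝ) • v‖ ≤ ‖u‖ + ε := by
      rw [mem_ball, dist_eq_norm] at hk
      calc ‖t - (k : ℝ) • v‖ = ‖u + (t - (u + (k : ℝ) • v))‖ := by congr 1; abel
        _ ≤ ‖u‖ + ε := (norm_add_le _ _).trans (by linarith)
    gcongr
    rw [hinner]
    exact (real_inner_le_norm _ _).trans (by gcongr)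
  calc ∞ = ∫⁻ _ in T, ENNReal.ofReal (Real.exp (-(‖β‖ * (‖u‖ + ε)))) ∂μ := by
        rw [setLIntegral_const, measure_iUnion_ball_add_smul_eq_top μ u v hε hv.ge,
          ENNReal.mul_top (by positivity)]
    _ ≤ ∫⁻ t in T, ENNReal.ofReal (Real.exp (-⟪β, t⟫)) ∂μ :=
        setLIntegral_mono' (MeasurableSet.iUnion fun _ => measurableSet_ball) hbound
    _ ≤ ∫⁻ t in innerDual Γ, ENNReal.ofReal (Real.exp (-⟪β, t⟫)) ∂μ := lintegral_mono_set hT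

theorem integrableOn_innerDual_exp_neg_inner {Γ : Set E} {y : E} (hy : Γ ∈ 𝓝 y) :
    IntegrableOn (fun t => Real.exp (-⟪y, t⟫)) (innerDual Γ) μ := by
  obtain ⟨r, hr, hry⟩ := nhds_basis_closedBall.mem_iff.1 hy
  refine (integrable_exp_neg_mul_norm μ hr).integrableOn.mono' (by fun_prop) ?_
  filter_upwards [ae_restrict_mem (innerDual Γ).isClosed.measurableSet] with t ht
  rw [Real.norm_of_nonneg (Real.exp_nonneg _), Real.exp_le_exp, neg_le_neg_iff]
  exact mul_norm_le_inner_of_closedBall_subset hr.le hry ht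

end InnerProductSpace

theorem sum_mul_eq_inner {n : ℕ} (x t : EuclideanSpace ℝ (Fin n)) :
    ∑ j, x j * t j = ⟪x, t⟫ := by
  simp [PiLp.inner_apply, mul_comm]

theorem dualCone_eq_innerDual {n : ℕ} (Γ : Set (EuclideanSpace ℝ (Fin n))) :
    dualCone Γ = innerDual Γ := by
  ext t
  simp [dualCone, sum_mul_eq_inner]

theorem szego_diagonal_blows_up_at_boundary_general
    (Γ : Set (EuclideanSpace ℝ (Fin 2)))
    (hopen : IsOpen Γ)
    (hcone : ∀ x ∈ Γ, ∀ y ∈ Γ, ∀ a b : ℝ, 0 < a → 0 < b → a • x + b • y ∈ Γ)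
    (hreg : (interior (dualCone Γ)).Nonempty)
    (β : EuclideanSpace ℝ (Fin 2)) (hβ : β ∈ frontier Γ) :
    ∀ M : ℝ, 0 < M → ∃ δ > (0 : ℝ), ∀ y ∈ Γ, ‖y - β‖ < δ →
      M ≤ ∫ t in dualCone Γ, Real.exp (-(4 * Real.pi * ∑ j, y j * t j)) := by
  intro M _
  obtain ⟨C, rfl⟩ := exists_convexCone_coe_eq hcone
  have hintegrand (y t : EuclideanSpace ℝ (Fin 2)) :
      4 * Real.pi * ∑ j, y j * t j = ⟪(4 * Real.pi) • y, t⟫ := by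
    rw [sum_mul_eq_inner, real_inner_smul_left]
  simp only [hintegrand, dualCone_eq_innerDual] at hreg ⊢
  obtain ⟨t₁, ht₁, ht₁0, hβt₁⟩ := C.exists_mem_innerDual_inner_eq_zero_of_mem_frontier hopen hβ
  have htop := setLIntegral_innerDual_exp_neg_inner_eq_top volume hreg ht₁ ht₁0
    (β := (4 * Real.pi) • β) (by rw [real_inner_smul_left, hβt₁, mul_zero])
  have hlarge : ∀ᶠ z in 𝓝 ((4 * Real.pi) • β), ENNReal.ofReal M <
      ∫⁻ t in (innerDual (C : Set (EuclideanSpace ℝ (Fin 2))) : Set _),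
        ENNReal.ofReal (Real.exp (-⟪z, t⟫)) :=
    lowerSemicontinuous_setLIntegral_exp_neg_inner volume _ _ (ENNReal.ofReal M)
      (by simp [htop])
  obtain ⟨δ, hδ, hδM⟩ := Metric.eventually_nhds_iff.1
    (((continuous_const_smul (4 * Real.pi)).tendsto β).eventually hlarge)
  refine ⟨δ, hδ, fun y hy hyβ => ?_⟩
  have hint := integrableOn_innerDual_exp_neg_inner volume
    (hopen.mem_nhds (C.smul_mem (by positivity : (0 : ℝ) < 4 * Real.pi) hy))
  rw [integral_eq_lintegral_of_nonneg_ae (ae_of_all _ fun _ => Real.exp_nonneg _)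
    hint.aestronglyMeasurable]
  exact (ENNReal.ofReal_le_iff_le_toReal hint.lintegral_lt_top.ne).1
    (hδM (by rwa [dist_eq_norm])).le

/-- For a regular cone `Γ` in `ℝ²` and a boundary point `β ∈ ∂Γ`, the diagonal of the
Cauchy–Szegő kernel `K(z, conj z) = ∫_{Γ*} e^{−4π y·t} dt` tends to `∞` as `y → β`, `y ∈ Γ`. -/
theorem szego_diagonal_blows_up_at_boundary
    (Γ : Set (EuclideanSpace ℝ (Fin 2)))
    (hopen : IsOpen Γ) (hne : Γ.Nonempty) (h0 : (0 : EuclideanSpace ℝ (Fin 2)) ∉ Γ)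
    (hcone : ∀ x ∈ Γ, ∀ y ∈ Γ, ∀ a b : ℝ, 0 < a → 0 < b → a • x + b • y ∈ Γ)
    (hreg : (interior (dualCone Γ)).Nonempty)
    (β : EuclideanSpace ℝ (Fin 2)) (hβ : β ∈ frontier Γ) :
    ∀ M : ℝ, 0 < M → ∃ δ > (0 : ℝ), ∀ y ∈ Γ, ‖y - β‖ < δ →
      M ≤ ∫ t in dualCone Γ, Real.exp (-(4 * Real.pi * ∑ j, y j * t j)) :=
  szego_diagonal_blows_up_at_boundary_general Γ hopen hcone hreg β hβ
end
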